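/- Every fiber of the twistor fibration π : CP^3 → HP^1 is a projective line that is invariant under the involution j[z0,z1,z2,z3] = [-conj(z1), conj(z0), -conj(z3), conj(z2)]. Conversely, every projective line L ⊂ CP^3 with j(L) = L is a fiber of π. -/

import Mathlib

/-- Complex projective 3-space. -/
noncomputable abbrev CP3 := Projectivization ℂ (Fin 4 → ℂ)
/-- Left quaternionic projective line. -/
noncomputable abbrev HP1 := Projectivization (Quaternion ℝ) (Fin 2 → Quaternion ℝ)

/-- The conjugate-linear map `j(z0,z1,z2,z3) = (-conj z1, conj z0, -conj z3, conj z2)`. -/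
noncomputable def jMap (v : Fin 4 → ℂ) : Fin 4 → ℂ :=
  ![-(starRingEnd ℂ (v 1)), starRingEnd ℂ (v 0), -(starRingEnd ℂ (v 3)), starRingEnd ℂ (v 2)]

lemma jMap_ne_zero {v : Fin 4 → ℂ} (hv : v ≠ 0) : jMap v ≠ 0 := by
  intro h
  apply hv
  funext i
  have h0 := congrFun h 0
  have h1 := congrFun h 1
  have h2 := congrFun h 2
  have h3 := congrFun h 3
  simp only [jMap, Matrix.cons_val_zero, Matrix.cons_val_one, Matrix.head_cons,
    Matrix.cons_val_two, Matrix.cons_val_three, Matrix.tail_cons, Pi.zero_apply,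
    neg_eq_zero, map_eq_zero] at h0 h1 h2 h3
  fin_cases i <;> simp [h0, h1, h2, h3]

/-- The anti-holomorphic involution induced by `jMap` on `CP3`. -/
noncomputable def jProj (p : CP3) : CP3 :=
  Projectivization.mk ℂ (jMap p.rep) (jMap_ne_zero p.rep_nonzero)

/-- The complex number `a` viewed as a quaternion. -/
noncomputable def toQ (a : ℂ) : Quaternion ℝ := ⟨a.re, a.im, 0, 0⟩
/-- The quaternionic imaginary unit `j`. -/
noncomputable def qj : Quaternion ℝ := ⟨0, 0, 1, 0⟩

lemma cpair_eq (a b : ℂ) : toQ a + toQ b * qj = (⟨a.re, a.im, b.re, b.im⟩ : Quaternion ℝ) := by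
  ext
  · erw [QuaternionAlgebra.re_add, QuaternionAlgebra.re_mul]; simp [toQ, qj]
  · erw [QuaternionAlgebra.imI_add, QuaternionAlgebra.imI_mul]; simp [toQ, qj]
  · erw [QuaternionAlgebra.imJ_add, QuaternionAlgebra.imJ_mul]; simp [toQ, qj]
  · erw [QuaternionAlgebra.imK_add, QuaternionAlgebra.imK_mul]; simp [toQ, qj]

lemma cpair_eq_zero {a b : ℂ} (h : toQ a + toQ b * qj = 0) : a = 0 ∧ b = 0 := by
  rw [cpair_eq] at h
  have h' := Quaternion.ext_iff.mp h
  simp at h'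
  constructor <;> [exact Complex.ext h'.1 h'.2.1; exact Complex.ext h'.2.2.1 h'.2.2.2]

/-- `(z0,z1,z2,z3) ↦ (z0 + z1 j, z2 + z3 j)`. -/
noncomputable def piRaw (z : Fin 4 → ℂ) : Fin 2 → Quaternion ℝ :=
  ![toQ (z 0) + toQ (z 1) * qj, toQ (z 2) + toQ (z 3) * qj]

lemma piRaw_ne_zero {z : Fin 4 → ℂ} (hz : z ≠ 0) : piRaw z ≠ 0 := by
  intro h
  apply hz
  have h0 := cpair_eq_zero (congrFun h 0)
  have h1 := cpair_eq_zero (congrFun h 1)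
  funext i
  fin_cases i <;> simp [h0.1, h0.2, h1.1, h1.2]

/-- The twistor fibration `π : CP3 → HP1`. -/
noncomputable def piProj (p : CP3) : HP1 :=
  Projectivization.mk (Quaternion ℝ) (piRaw p.rep) (piRaw_ne_zero p.rep_nonzero)

/-- A projective line in `CP3`: the projectivization of a 2-dimensional subspace of `ℂ⁴`. -/
def IsProjLine (L : Set CP3) : Prop :=
  ∃ W : Submodule ℂ (Fin 4 → ℂ), Module.finrank ℂ ↥W = 2 ∧ L = {p | p.submodule ≤ W}

/-- A twistor line: a projective line invariant under the involution `j`. -/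
def IsTwistorLine (L : Set CP3) : Prop := IsProjLine L ∧ jProj '' L = L

@[simp] lemma qD_re_add (x y : (@Quaternion ℝ Real.instZero Real.instOne Real.instNeg)) :
    @QuaternionAlgebra.re ℝ (@Neg.neg ℝ Real.instNeg (@OfNat.ofNat ℝ 1 (@One.toOfNat1 ℝ Real.instOne))) (@OfNat.ofNat ℝ 0 (@Zero.toOfNat0 ℝ Real.instZero)) (@Neg.neg ℝ Real.instNeg (@OfNat.ofNat ℝ 1 (@One.toOfNat1 ℝ Real.instOne)))
      (@HAdd.hAdd (@Quaternion ℝ Real.instZero Real.instOne Real.instNeg) (@Quaternion ℝ Real.instZero Real.instOne Real.instNeg) (@Quaternion ℝ Real.instZero Real.instOne Real.instNeg) (@instHAdd (@Quaternion ℝ Real.instZero Real.instOne Real.instNeg) (@Distrib.toAdd (@Quaternion ℝ Real.instZero Real.instOne Real.instNeg) (@instDistribOfSemiring (@Quaternion ℝ Real.instZero Real.instOne Real.instNeg) (@DivisionSemiring.toSemiring (@Quaternion ℝ Real.instZero Real.instOne Real.instNeg) (@DivisionRing.toDivisionSemiring (@Quaternion ℝ Real.instZero Real.instOne Real.instNeg)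 (@Quaternion.instDivisionRing ℝ Real.instField Real.linearOrder Real.instIsStrictOrderedRing)))))) x y) =
      x.re + y.re :=
  Quaternion.re_add x y
@[simp] lemma qD_imI_add (x y : (@Quaternion ℝ Real.instZero Real.instOne Real.instNeg)) :
    @QuaternionAlgebra.imI ℝ (@Neg.neg ℝ Real.instNeg (@OfNat.ofNat ℝ 1 (@One.toOfNat1 ℝ Real.instOne))) (@OfNat.ofNat ℝ 0 (@Zero.toOfNat0 ℝ Real.instZero)) (@Neg.neg ℝ Real.instNeg (@OfNat.ofNat ℝ 1 (@One.toOfNat1 ℝ Real.instOne)))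
      (@HAdd.hAdd (@Quaternion ℝ Real.instZero Real.instOne Real.instNeg) (@Quaternion ℝ Real.instZero Real.instOne Real.instNeg) (@Quaternion ℝ Real.instZero Real.instOne Real.instNeg) (@instHAdd (@Quaternion ℝ Real.instZero Real.instOne Real.instNeg) (@Distrib.toAdd (@Quaternion ℝ Real.instZero Real.instOne Real.instNeg) (@instDistribOfSemiring (@Quaternion ℝ Real.instZero Real.instOne Real.instNeg) (@DivisionSemiring.toSemiring (@Quaternion ℝ Real.instZero Real.instOne Real.instNeg) (@DivisionRing.toDivisionSemiring (@Quaternion ℝ Real.instZero Real.instOne Real.instNeg) (@Quaternion.instDivisionRing ℝ Real.instField Real.linearOrder Real.instIsStrictOrderedRing)))))) x y) =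
      x.imI + y.imI :=
  Quaternion.imI_add x y
@[simp] lemma qD_imJ_add (x y : (@Quaternion ℝ Real.instZero Real.instOne Real.instNeg)) :
    @QuaternionAlgebra.imJ ℝ (@Neg.neg ℝ Real.instNeg (@OfNat.ofNat ℝ 1 (@One.toOfNat1 ℝ Real.instOne))) (@OfNat.ofNat ℝ 0 (@Zero.toOfNat0 ℝ Real.instZero)) (@Neg.neg ℝ Real.instNeg (@OfNat.ofNat ℝ 1 (@One.toOfNat1 ℝ Real.instOne)))
      (@HAdd.hAdd (@Quaternion ℝ Real.instZero Real.instOne Real.instNeg) (@Quaternion ℝ Real.instZero Real.instOne Real.instNeg) (@Quaternion ℝ Real.instZero Real.instOne Real.instNeg) (@instHAdd (@Quaternion ℝ Real.instZero Real.instOne Real.instNeg) (@Distrib.toAdd (@Quaternion ℝ Real.instZero Real.instOne Real.instNeg) (@instDistribOfSemiring (@Quaternion ℝ Real.instZero Real.instOne Real.instNeg) (@DivisionSemiring.toSemiring (@Quaternion ℝ Real.instZero Real.instOne Real.instNeg) (@DivisionRing.toDivisionSemiring (@Quaternion ℝ Real.instZero Real.instOne Real.instNeg) (@Quaternion.instDivisionRing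 ℝ Real.instField Real.linearOrder Real.instIsStrictOrderedRing)))))) x y) =
      x.imJ + y.imJ :=
  Quaternion.imJ_add x y
@[simp] lemma qD_imK_add (x y : (@Quaternion ℝ Real.instZero Real.instOne Real.instNeg)) :
    @QuaternionAlgebra.imK ℝ (@Neg.neg ℝ Real.instNeg (@OfNat.ofNat ℝ 1 (@One.toOfNat1 ℝ Real.instOne))) (@OfNat.ofNat ℝ 0 (@Zero.toOfNat0 ℝ Real.instZero)) (@Neg.neg ℝ Real.instNeg (@OfNat.ofNat ℝ 1 (@One.toOfNat1 ℝ Real.instOne)))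
      (@HAdd.hAdd (@Quaternion ℝ Real.instZero Real.instOne Real.instNeg) (@Quaternion ℝ Real.instZero Real.instOne Real.instNeg) (@Quaternion ℝ Real.instZero Real.instOne Real.instNeg) (@instHAdd (@Quaternion ℝ Real.instZero Real.instOne Real.instNeg) (@Distrib.toAdd (@Quaternion ℝ Real.instZero Real.instOne Real.instNeg) (@instDistribOfSemiring (@Quaternion ℝ Real.instZero Real.instOne Real.instNeg) (@DivisionSemiring.toSemiring (@Quaternion ℝ Real.instZero Real.instOne Real.instNeg) (@DivisionRing.toDivisionSemiring (@Quaternion ℝ Real.instZero Real.instOne Real.instNeg) (@Quaternion.instDivisionRing ℝ Real.instField Real.linearOrder Real.instIsStrictOrderedRing)))))) x y) =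
      x.imK + y.imK :=
  Quaternion.imK_add x y
@[simp] lemma qD_re_mul (x y : (@Quaternion ℝ Real.instZero Real.instOne Real.instNeg)) :
    @QuaternionAlgebra.re ℝ (@Neg.neg ℝ Real.instNeg (@OfNat.ofNat ℝ 1 (@One.toOfNat1 ℝ Real.instOne))) (@OfNat.ofNat ℝ 0 (@Zero.toOfNat0 ℝ Real.instZero)) (@Neg.neg ℝ Real.instNeg (@OfNat.ofNat ℝ 1 (@One.toOfNat1 ℝ Real.instOne)))
      (@HMul.hMul (@Quaternion ℝ Real.instZero Real.instOne Real.instNeg) (@Quaternion ℝ Real.instZero Real.instOne Real.instNeg) (@Quaternion ℝ Real.instZero Real.instOne Real.instNeg) (@instHMul (@Quaternion ℝ Real.instZero Real.instOne Real.instNeg) (@Distrib.toMul (@Quaternion ℝ Real.instZero Real.instOne Real.instNeg) (@instDistribOfSemiring (@Quaternion ℝ Real.instZero Real.instOne Real.instNeg) (@DivisionSemiring.toSemiring (@Quaternion ℝ Real.instZero Real.instOne Real.instNeg) (@DivisionRing.toDivisionSemiring (@Quaternion ℝ Real.instZero Real.instOne Real.instNeg) (@Quaternion.instDivisionRing ℝ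 Real.instField Real.linearOrder Real.instIsStrictOrderedRing)))))) x y) =
      x.re * y.re - x.imI * y.imI - x.imJ * y.imJ - x.imK * y.imK :=
  Quaternion.re_mul x y
@[simp] lemma qD_imI_mul (x y : (@Quaternion ℝ Real.instZero Real.instOne Real.instNeg)) :
    @QuaternionAlgebra.imI ℝ (@Neg.neg ℝ Real.instNeg (@OfNat.ofNat ℝ 1 (@One.toOfNat1 ℝ Real.instOne))) (@OfNat.ofNat ℝ 0 (@Zero.toOfNat0 ℝ Real.instZero)) (@Neg.neg ℝ Real.instNeg (@OfNat.ofNat ℝ 1 (@One.toOfNat1 ℝ Real.instOne)))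
      (@HMul.hMul (@Quaternion ℝ Real.instZero Real.instOne Real.instNeg) (@Quaternion ℝ Real.instZero Real.instOne Real.instNeg) (@Quaternion ℝ Real.instZero Real.instOne Real.instNeg) (@instHMul (@Quaternion ℝ Real.instZero Real.instOne Real.instNeg) (@Distrib.toMul (@Quaternion ℝ Real.instZero Real.instOne Real.instNeg) (@instDistribOfSemiring (@Quaternion ℝ Real.instZero Real.instOne Real.instNeg) (@DivisionSemiring.toSemiring (@Quaternion ℝ Real.instZero Real.instOne Real.instNeg) (@DivisionRing.toDivisionSemiring (@Quaternion ℝ Real.instZero Real.instOne Real.instNeg) (@Quaternion.instDivisionRing ℝ Real.instField Real.linearOrder Real.instIsStrictOrderedRing)))))) x y) =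
      x.re * y.imI + x.imI * y.re + x.imJ * y.imK - x.imK * y.imJ :=
  Quaternion.imI_mul x y
@[simp] lemma qD_imJ_mul (x y : (@Quaternion ℝ Real.instZero Real.instOne Real.instNeg)) :
    @QuaternionAlgebra.imJ ℝ (@Neg.neg ℝ Real.instNeg (@OfNat.ofNat ℝ 1 (@One.toOfNat1 ℝ Real.instOne))) (@OfNat.ofNat ℝ 0 (@Zero.toOfNat0 ℝ Real.instZero)) (@Neg.neg ℝ Real.instNeg (@OfNat.ofNat ℝ 1 (@One.toOfNat1 ℝ Real.instOne)))
      (@HMul.hMul (@Quaternion ℝ Real.instZero Real.instOne Real.instNeg) (@Quaternion ℝ Real.instZero Real.instOne Real.instNeg) (@Quaternion ℝ Real.instZero Real.instOne Real.instNeg) (@instHMul (@Quaternion ℝ Real.instZero Real.instOne Real.instNeg) (@Distrib.toMul (@Quaternion ℝ Real.instZero Real.instOne Real.instNeg) (@instDistribOfSemiring (@Quaternion ℝ Real.instZero Real.instOne Real.instNeg) (@DivisionSemiring.toSemiring (@Quaternion ℝ Real.instZero Real.instOne Real.instNeg) (@DivisionRing.toDivisionSemiring (@Quaternion ℝ Real.instZero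 Real.instOne Real.instNeg) (@Quaternion.instDivisionRing ℝ Real.instField Real.linearOrder Real.instIsStrictOrderedRing)))))) x y) =
      x.re * y.imJ - x.imI * y.imK + x.imJ * y.re + x.imK * y.imI :=
  Quaternion.imJ_mul x y
@[simp] lemma qD_imK_mul (x y : (@Quaternion ℝ Real.instZero Real.instOne Real.instNeg)) :
    @QuaternionAlgebra.imK ℝ (@Neg.neg ℝ Real.instNeg (@OfNat.ofNat ℝ 1 (@One.toOfNat1 ℝ Real.instOne))) (@OfNat.ofNat ℝ 0 (@Zero.toOfNat0 ℝ Real.instZero)) (@Neg.neg ℝ Real.instNeg (@OfNat.ofNat ℝ 1 (@One.toOfNat1 ℝ Real.instOne)))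
      (@HMul.hMul (@Quaternion ℝ Real.instZero Real.instOne Real.instNeg) (@Quaternion ℝ Real.instZero Real.instOne Real.instNeg) (@Quaternion ℝ Real.instZero Real.instOne Real.instNeg) (@instHMul (@Quaternion ℝ Real.instZero Real.instOne Real.instNeg) (@Distrib.toMul (@Quaternion ℝ Real.instZero Real.instOne Real.instNeg) (@instDistribOfSemiring (@Quaternion ℝ Real.instZero Real.instOne Real.instNeg) (@DivisionSemiring.toSemiring (@Quaternion ℝ Real.instZero Real.instOne Real.instNeg) (@DivisionRing.toDivisionSemiring (@Quaternion ℝ Real.instZero Real.instOne Real.instNeg) (@Quaternion.instDivisionRing ℝ Real.instField Real.linearOrder Real.instIsStrictOrderedRing)))))) x y) =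
      x.re * y.imK + x.imI * y.imJ - x.imJ * y.imI + x.imK * y.re :=
  Quaternion.imK_mul x y

open Projectivization

lemma toQ_zero : toQ 0 = 0 := by
  ext <;> simp [toQ] <;> rfl

lemma toQ_ne_zero {a : ℂ} (h : a ≠ 0) : toQ a ≠ 0 := by
  intro hq
  apply h
  have h1 : (toQ a).re = (0 : Quaternion ℝ).re := by rw [hq]
  have h2 : (toQ a).imI = (0 : Quaternion ℝ).imI := by rw [hq]
  exact Complex.ext h1 h2

lemma jMap_smul (a : ℂ) (z : Fin 4 → ℂ) :
    jMap (a • z) = (starRingEnd ℂ a) • jMap z := by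
  funext i
  fin_cases i <;> simp [jMap, mul_comm]

lemma jMap_add (z w : Fin 4 → ℂ) : jMap (z + w) = jMap z + jMap w := by
  funext i
  fin_cases i <;> simp [jMap] <;> ring

lemma jMap_jMap (z : Fin 4 → ℂ) : jMap (jMap z) = -z := by
  funext i
  fin_cases i <;> simp [jMap]

lemma piRaw_comb (a b : ℂ) (z : Fin 4 → ℂ) :
    piRaw (a • z + b • jMap z) = (toQ a + toQ b * qj) • piRaw z := by
  funext i
  fin_cases i <;>
  · refine Quaternion.ext_iff.mpr ⟨?_, ?_, ?_, ?_⟩ <;>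
    · simp only [piRaw, Pi.smul_apply, smul_eq_mul, Fin.zero_eta, Fin.mk_one, Fin.isValue,
          Matrix.cons_val_zero, Matrix.cons_val_one, Matrix.head_cons, qD_re_add, qD_imI_add, qD_imJ_add, qD_imK_add, qD_re_mul, qD_imI_mul, qD_imJ_mul, qD_imK_mul]
      simp [piRaw, jMap, toQ, qj, Quaternion.re_mul, Quaternion.imI_mul, Quaternion.imJ_mul,
        Quaternion.imK_mul, Complex.add_re, Complex.add_im, Complex.mul_re, Complex.mul_im]
      try ring

lemma piRaw_smul (a : ℂ) (z : Fin 4 → ℂ) : piRaw (a • z) = toQ a • piRaw z := by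
  have h := piRaw_comb a 0 z
  simpa [toQ_zero] using h

lemma piRaw_inj {z w : Fin 4 → ℂ} (h : piRaw z = piRaw w) : z = w := by
  have h0 := congrFun h 0
  have h1 := congrFun h 1
  simp only [piRaw, Matrix.cons_val_zero, Matrix.cons_val_one, Matrix.head_cons] at h0 h1
  rw [cpair_eq, cpair_eq] at h0 h1
  have h0' := Quaternion.ext_iff.mp h0
  have h1' := Quaternion.ext_iff.mp h1
  simp at h0' h1'
  funext i
  fin_cases i
  · exact Complex.ext h0'.1 h0'.2.1
  · exact Complex.ext h0'.2.2.1 h0'.2.2.2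
  · exact Complex.ext h1'.1 h1'.2.1
  · exact Complex.ext h1'.2.2.1 h1'.2.2.2

lemma jProj_mk (z : Fin 4 → ℂ) (hz : z ≠ 0) :
    jProj (Projectivization.mk ℂ z hz) = Projectivization.mk ℂ (jMap z) (jMap_ne_zero hz) := by
  obtain ⟨a, ha⟩ := Projectivization.exists_smul_eq_mk_rep ℂ z hz
  unfold jProj
  rw [Projectivization.mk_eq_mk_iff]
  refine ⟨Units.mk0 (starRingEnd ℂ (a : ℂ)) (by simp [a.ne_zero]), ?_⟩
  rw [Units.smul_def]
  show (starRingEnd ℂ (a : ℂ)) • jMap z = _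
  rw [← jMap_smul]
  congr 1

lemma piProj_mk (z : Fin 4 → ℂ) (hz : z ≠ 0) :
    piProj (Projectivization.mk ℂ z hz) =
      Projectivization.mk (Quaternion ℝ) (piRaw z) (piRaw_ne_zero hz) := by
  obtain ⟨a, ha⟩ := Projectivization.exists_smul_eq_mk_rep ℂ z hz
  unfold piProj
  rw [Projectivization.mk_eq_mk_iff]
  refine ⟨Units.mk0 (toQ (a : ℂ)) (toQ_ne_zero a.ne_zero), ?_⟩
  rw [Units.smul_def]
  show (toQ (a : ℂ)) • piRaw z = _
  rw [← piRaw_smul]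
  congr 1

lemma jProj_invol (p : CP3) : jProj (jProj p) = p := by
  conv_lhs => rw [← Projectivization.mk_rep p]
  rw [jProj_mk, jProj_mk]
  conv_rhs => rw [← Projectivization.mk_rep p]
  rw [Projectivization.mk_eq_mk_iff']
  exact ⟨-1, by rw [jMap_jMap]; module⟩

/-- The fiber of `π` through `mk z` is the projectivization of `span {z, jMap z}`. -/
lemma fiber_eq (z : Fin 4 → ℂ) (hz : z ≠ 0) :
    piProj ⁻¹' {Projectivization.mk (Quaternion ℝ) (piRaw z) (piRaw_ne_zero hz)} =
      {p : CP3 | p.submodule ≤ Submodule.span ℂ {z, jMap z}} := by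
  ext p
  induction p using Projectivization.ind with
  | h v hv =>
    simp only [Set.mem_preimage, Set.mem_singleton_iff, Set.mem_setOf_eq, piProj_mk,
      Projectivization.submodule_mk, Submodule.span_singleton_le_iff_mem]
    rw [Projectivization.mk_eq_mk_iff']
    constructor
    · rintro ⟨q, hq⟩
      have hdec : toQ ⟨q.re, q.imI⟩ + toQ ⟨q.imJ, q.imK⟩ * qj = q := by
        refine Quaternion.ext_iff.mpr ⟨?_, ?_, ?_, ?_⟩ <;>
          simp only [piRaw, Pi.smul_apply, smul_eq_mul, Fin.zero_eta, Fin.mk_one, Fin.isValue,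
          Matrix.cons_val_zero, Matrix.cons_val_one, Matrix.head_cons, qD_re_add, qD_imI_add, qD_imJ_add, qD_imK_add, qD_re_mul, qD_imI_mul, qD_imJ_mul, qD_imK_mul] <;>
          simp [toQ, qj, Quaternion.re_mul, Quaternion.imI_mul, Quaternion.imJ_mul,
            Quaternion.imK_mul]
      rw [← hdec, ← piRaw_comb] at hq
      have hv' := piRaw_inj hq
      rw [← hv']
      exact Submodule.mem_span_pair.2 ⟨_, _, rfl⟩
    · intro hvW
      obtain ⟨a, b, hab⟩ := Submodule.mem_span_pair.1 hvW
      exact ⟨toQ a + toQ b * qj, by rw [← piRaw_comb, hab]⟩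

lemma finrank_span_pair_eq_two (z : Fin 4 → ℂ) (hz : z ≠ 0) :
    Module.finrank ℂ ↥(Submodule.span ℂ {z, jMap z}) = 2 := by
  have hli : LinearIndependent ℂ ![z, jMap z] := by
    rw [LinearIndependent.pair_iff]
    intro s t hst
    by_cases ht : t = 0
    · subst ht
      simp only [zero_smul, add_zero] at hst
      rcases smul_eq_zero.mp hst with h | h
      · exact ⟨h, rfl⟩
      · exact absurd h hz
    · exfalso
      have hj : jMap z = (-(s/t)) • z := by
        have : t • jMap z = (-s) • z := by
          rw [neg_smul]; exact eq_neg_of_add_eq_zero_right hst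
        have h2 : jMap z = (t⁻¹ * (-s)) • z := by
          rw [mul_smul, ← this, ← mul_smul, inv_mul_cancel₀ ht, one_smul]
        rw [h2]; congr 1; field_simp
      set c : ℂ := -(s/t) with hc
      have h3 : jMap (jMap z) = (starRingEnd ℂ c * c) • z := by
        rw [hj, jMap_smul, hj, ← mul_smul]
      rw [jMap_jMap] at h3
      have h4 : (starRingEnd ℂ c * c + 1) • z = 0 := by
        rw [add_smul, one_smul, ← h3]; module
      rcases smul_eq_zero.mp h4 with h | h
      · have h5 : (starRingEnd ℂ c * c).re + 1 = 0 := by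
          have := congrArg Complex.re h
          simpa using this
        have h6 : (starRingEnd ℂ c * c).re = Complex.normSq c := by
          simp [Complex.normSq_apply, Complex.mul_re]
        nlinarith [Complex.normSq_nonneg c, h5, h6]
      · exact hz h
  have hr : Set.range ![z, jMap z] = {z, jMap z} := by
    ext x
    simp only [Matrix.range_cons, Matrix.range_empty, Set.union_empty, Set.union_singleton,
      Set.mem_insert_iff, Set.mem_singleton_iff]
    tauto
  have := finrank_span_eq_card hli
  rw [hr] at this
  rw [this]
  simp

/-- `jProj` preserves membership in the projectivized span of `{z, jMap z}`. -/
lemma jProj_mem_fiber {z : Fin 4 → ℂ} (p : CP3)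
    (hp : p.submodule ≤ Submodule.span ℂ {z, jMap z}) :
    (jProj p).submodule ≤ Submodule.span ℂ {z, jMap z} := by
  induction p using Projectivization.ind with
  | h v hv =>
    rw [jProj_mk]
    rw [Projectivization.submodule_mk, Submodule.span_singleton_le_iff_mem] at hp ⊢
    obtain ⟨a, b, hab⟩ := Submodule.mem_span_pair.1 hp
    have hjv : jMap v = (starRingEnd ℂ a) • jMap z + (-(starRingEnd ℂ b)) • z := by
      rw [← hab, jMap_add, jMap_smul, jMap_smul, jMap_jMap]
      module
    rw [hjv]
    have hz1 : z ∈ Submodule.span ℂ {z, jMap z} :=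
      Submodule.subset_span (by simp)
    have hz2 : jMap z ∈ Submodule.span ℂ {z, jMap z} :=
      Submodule.subset_span (by simp)
    exact Submodule.add_mem _ (Submodule.smul_mem _ _ hz2) (Submodule.smul_mem _ _ hz1)

lemma jProj_image_fiber {z : Fin 4 → ℂ} :
    jProj '' {p : CP3 | p.submodule ≤ Submodule.span ℂ {z, jMap z}} =
      {p : CP3 | p.submodule ≤ Submodule.span ℂ {z, jMap z}} := by
  ext p
  constructor
  · rintro ⟨q, hq, rfl⟩
    exact jProj_mem_fiber q hq
  · intro hp
    exact ⟨jProj p, jProj_mem_fiber p hp, jProj_invol p⟩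

noncomputable def invPi (w : Fin 2 → Quaternion ℝ) : Fin 4 → ℂ :=
  ![⟨(w 0).re, (w 0).imI⟩, ⟨(w 0).imJ, (w 0).imK⟩, ⟨(w 1).re, (w 1).imI⟩, ⟨(w 1).imJ, (w 1).imK⟩]

lemma piRaw_invPi (w : Fin 2 → Quaternion ℝ) : piRaw (invPi w) = w := by
  funext i
  fin_cases i <;>
  · refine Quaternion.ext_iff.mpr ⟨?_, ?_, ?_, ?_⟩ <;>
      simp only [piRaw, Pi.smul_apply, smul_eq_mul, Fin.zero_eta, Fin.mk_one, Fin.isValue,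
          Matrix.cons_val_zero, Matrix.cons_val_one, Matrix.head_cons, qD_re_add, qD_imI_add, qD_imJ_add, qD_imK_add, qD_re_mul, qD_imI_mul, qD_imJ_mul, qD_imK_mul] <;>
      simp [piRaw, invPi, toQ, qj, Quaternion.re_mul, Quaternion.imI_mul, Quaternion.imJ_mul,
        Quaternion.imK_mul]

lemma piRaw_zero : piRaw 0 = 0 := by
  funext i
  fin_cases i <;> simp [piRaw, toQ_zero]

/-- every fiber of `π` is a `j`-invariant projective line, and conversely every
`j`-invariant projective line is a fiber of `π`. -/
theorem stmt_3 :
    (∀ q : HP1, IsProjLine (piProj ⁻¹' {q}) ∧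
      jProj '' (piProj ⁻¹' {q}) = piProj ⁻¹' {q}) ∧
    (∀ L : Set CP3, IsProjLine L → jProj '' L = L → ∃ q : HP1, L = piProj ⁻¹' {q}) := by
  constructor
  · intro q
    set z : Fin 4 → ℂ := invPi q.rep with hzdef
    have hpz : piRaw z = q.rep := piRaw_invPi q.rep
    have hz : z ≠ 0 := by
      intro h
      apply q.rep_nonzero
      rw [← hpz, h, piRaw_zero]
    have hq' : q = Projectivization.mk (Quaternion ℝ) (piRaw z) (piRaw_ne_zero hz) := by
      conv_lhs => rw [← Projectivization.mk_rep q]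
      exact (Projectivization.mk_eq_mk_iff' _ _ _ q.rep_nonzero (piRaw_ne_zero hz)).2
        ⟨1, by rw [one_smul, hpz]⟩
    have hfib := fiber_eq z hz
    rw [hq', hfib]
    refine ⟨⟨Submodule.span ℂ {z, jMap z}, finrank_span_pair_eq_two z hz, rfl⟩, ?_⟩
    exact jProj_image_fiber
  · rintro L ⟨W, hW2, rfl⟩ hinv
    have hWbot : W ≠ ⊥ := by
      intro h
      rw [h] at hW2
      simp at hW2
    obtain ⟨z, hzW, hz⟩ := Submodule.exists_mem_ne_zero_of_ne_bot hWbot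
    have hmk : Projectivization.mk ℂ z hz ∈ {p : CP3 | p.submodule ≤ W} := by
      rw [Set.mem_setOf_eq, Projectivization.submodule_mk,
        Submodule.span_singleton_le_iff_mem]
      exact hzW
    have hjmk : Projectivization.mk ℂ (jMap z) (jMap_ne_zero hz) ∈
        {p : CP3 | p.submodule ≤ W} := by
      rw [← jProj_mk z hz, ← hinv]
      exact ⟨_, hmk, rfl⟩
    have hjzW : jMap z ∈ W := by
      rw [Set.mem_setOf_eq, Projectivization.submodule_mk,
        Submodule.span_singleton_le_iff_mem] at hjmk
      exact hjmk
    have hle : Submodule.span ℂ {z, jMap z} ≤ W := by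
      rw [Submodule.span_le]
      intro x hx
      rcases hx with h | h
      · subst h; exact hzW
      · rw [Set.mem_singleton_iff] at h; subst h; exact hjzW
    have heq : Submodule.span ℂ {z, jMap z} = W :=
      Submodule.eq_of_le_of_finrank_eq hle (by rw [finrank_span_pair_eq_two z hz, hW2])
    refine ⟨Projectivization.mk (Quaternion ℝ) (piRaw z) (piRaw_ne_zero hz), ?_⟩
    rw [fiber_eq z hz, heq]
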